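/- Let p, q be primes with q dividing (p^p-1)/(p-1), and let H be any group of order p^p q. Then H has a normal Sylow p-subgroup or a normal Sylow q-subgroup. -/

import Mathlib

/-!
Since `q` divides `1 + p + ⋯ + p^(p-1)`, the order of `p` modulo `q` is `p`. The number of Sylow
`q`-subgroups divides `p^p` and is `≡ 1 (mod q)`, so it is `1` or `p^p`. In the first case the
Sylow `q`-subgroup is normal. In the second, the `p^p` subgroups of order `q` contain `p^p (q - 1)`
elements of order `q`, leaving exactly `p^p` elements of other orders; every Sylow `p`-subgroup
must consist of precisely these, so it is unique, hence normal.
-/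

open Finset Subgroup

theorem orderOf_eq_prime_of_geom_sum_eq_zero {R : Type*} [CommRing R] {p : ℕ} [Fact p.Prime]
    {x : R} (hx : ∑ i ∈ range p, x ^ i = 0) (hp : (p : R) ≠ 0) : orderOf x = p := by
  refine orderOf_eq_prime ?_ ?_
  · have h := geom_sum_mul x p
    rwa [hx, zero_mul, eq_comm, sub_eq_zero] at h
  · rintro rfl
    simp_all

theorem ZMod.orderOf_natCast_eq_of_dvd_geom_sum {p q : ℕ} [hp : Fact p.Prime] [Fact q.Prime]
    (h : q ∣ ∑ i ∈ range p, p ^ i) : orderOf (p : ZMod q) = p := by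
  have hsum : ∑ i ∈ range p, (p : ZMod q) ^ i = 0 := by
    exact_mod_cast (ZMod.natCast_eq_zero_iff _ _).mpr h
  refine orderOf_eq_prime_of_geom_sum_eq_zero hsum fun hp0 => ?_
  simp [hp0, zero_geom_sum, hp.out.ne_zero] at hsum

namespace Subgroup

variable {G : Type*} [Group G] {q : ℕ} [hq : Fact q.Prime] {K : Subgroup G}

theorem orderOf_eq_of_card_eq_prime (hK : Nat.card K = q) {x : G} (hx : x ∈ K) (hx1 : x ≠ 1) :
    orderOf x = q :=
  ((Nat.dvd_prime hq.out).mp (hK ▸ K.orderOf_dvd_natCard hx)).resolve_left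
    (mt orderOf_eq_one_iff.mp hx1)

theorem zpowers_eq_of_card_eq_prime (hK : Nat.card K = q) {x : G} (hx : x ∈ K) (hx1 : x ≠ 1) :
    zpowers x = K :=
  have : Finite K := Nat.finite_of_card_ne_zero (hK ▸ hq.out.ne_zero)
  eq_of_le_of_card_ge (zpowers_le.mpr hx) <| by
    rw [hK, Nat.card_zpowers, K.orderOf_eq_of_card_eq_prime hK hx hx1]

end Subgroup

section

variable {G : Type*} [Group G] [Finite G]

theorem Sylow.card_eq_pow_of_card_eq_pow_mul {p n m : ℕ} [hp : Fact p.Prime] (P : Sylow p G)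
    (hG : Nat.card G = p ^ n * m) (hm : ¬ p ∣ m) : Nat.card P = p ^ n := by
  have hm0 : m ≠ 0 := by rintro rfl; simp at hm
  rw [P.card_eq_multiplicity, hG, Nat.factorization_mul (pow_ne_zero _ hp.out.ne_zero) hm0,
    Nat.factorization_pow, Finsupp.add_apply, Finsupp.smul_apply, hp.out.factorization_self,
    Nat.factorization_eq_zero_of_not_dvd hm, smul_eq_mul, mul_one, add_zero]

theorem card_sylow_eq_one_or_eq_pow {p q n : ℕ} [hp : Fact p.Prime] [Fact q.Prime]
    (hG : Nat.card G = p ^ n * q) (hord : orderOf (p : ZMod q) = n) :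
    Nat.card (Sylow q G) = 1 ∨ Nat.card (Sylow q G) = p ^ n := by
  have hdvd : Nat.card (Sylow q G) ∣ p ^ n := by
    obtain ⟨Q⟩ := Sylow.nonempty (p := q) (G := G)
    refine (Nat.Coprime.dvd_mul_right ?_).mp (hG ▸ Q.card_dvd_index.trans Q.index_dvd_card)
    exact ((Nat.Prime.coprime_iff_not_dvd Fact.out).mpr (not_dvd_card_sylow q G)).symm
  obtain ⟨k, hkn, hk⟩ := (Nat.dvd_prime_pow hp.out).mp hdvd
  -- Sylow's theorem gives `p ^ k ≡ 1 [MOD q]`, so the order `n` of `p` divides `k ≤ n`.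
  have hnk : n ∣ k := by
    rw [← hord]
    apply orderOf_dvd_of_pow_eq_one
    exact_mod_cast (ZMod.natCast_eq_natCast_iff _ _ _).mpr (hk ▸ card_sylow_modEq_one q G)
  rcases k.eq_zero_or_pos with rfl | hk0
  · exact Or.inl (hk.trans (pow_zero p))
  · exact Or.inr (hk.trans (by rw [le_antisymm hkn (Nat.le_of_dvd hk0 hnk)]))

-- Distinct subgroups of prime order meet trivially, so the elements of order `q` are partitioned.
theorem ncard_setOf_orderOf_eq_prime {q : ℕ} [hq : Fact q.Prime]
    (hQ : ∀ Q : Sylow q G, Nat.card Q = q) :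
    {x : G | orderOf x = q}.ncard = Nat.card (Sylow q G) * (q - 1) := by
  classical
  have := Fintype.ofFinite G
  have := Fintype.ofFinite (Sylow q G)
  have hunion : {x : G | orderOf x = q} =
      ↑(univ.biUnion fun Q : Sylow q G => (Q : Set G).toFinset.erase 1) := by
    ext x
    simp only [Set.mem_ofPred_eq, coe_biUnion, coe_univ, Set.mem_univ, coe_erase,
      Set.coe_toFinset, Set.iUnion_true, Set.mem_iUnion, Set.mem_sdiff, SetLike.mem_coe,
      Set.mem_singleton_iff]
    constructor
    · intro hx
      have hx1 : x ≠ 1 := by rintro rfl; exact hq.out.one_lt.ne (orderOf_one.symm.trans hx)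
      obtain ⟨Q, hQx⟩ := (IsPGroup.of_card (by rw [Nat.card_zpowers, hx, pow_one]) :
        IsPGroup q (zpowers x)).exists_le_sylow
      exact ⟨Q, hQx (mem_zpowers x), hx1⟩
    · rintro ⟨Q, hx, hx1⟩
      exact orderOf_eq_of_card_eq_prime (hQ Q) hx hx1
  rw [hunion, Set.ncard_coe_finset, card_biUnion]
  · rw [sum_const_nat fun Q _ => ?_, card_univ, Nat.card_eq_fintype_card]
    rw [card_erase_of_mem (by simp), Set.toFinset_card, ← Nat.card_eq_fintype_card]
    exact congrArg (· - 1) (hQ Q)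
  · intro Q₁ _ Q₂ _ hne
    refine disjoint_left.mpr fun x hx₁ hx₂ => hne (Sylow.ext ?_)
    simp only [mem_erase, Set.mem_toFinset, SetLike.mem_coe] at hx₁ hx₂
    rw [← zpowers_eq_of_card_eq_prime (hQ Q₁) hx₁.2 hx₁.1,
      ← zpowers_eq_of_card_eq_prime (hQ Q₂) hx₂.2 hx₂.1]

-- The `m * (q - 1)` elements of order `q` leave exactly `m` elements, and a subgroup of order `m`
-- (prime to `q`) has none of order `q`.
theorem Subgroup.coe_eq_setOf_orderOf_ne_of_card_sylow_eq {m q : ℕ} [Fact q.Prime]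
    (hG : Nat.card G = m * q) (hsyl : Nat.card (Sylow q G) = m) {K : Subgroup G}
    (hK : Nat.card K = m) : (K : Set G) = {x | orderOf x ≠ q} := by
  have hqm : ¬ q ∣ m := hsyl ▸ not_dvd_card_sylow q G
  have hQ (Q : Sylow q G) : Nat.card Q = q := by
    simpa using Q.card_eq_pow_of_card_eq_pow_mul (n := 1) (by rw [hG, pow_one, mul_comm]) hqm
  have hsub : (K : Set G) ⊆ {x | orderOf x ≠ q} := fun x hx hxq =>
    hqm (hxq ▸ hK ▸ K.orderOf_dvd_natCard hx)
  refine Set.eq_of_subset_of_ncard_le hsub ?_ (Set.toFinite _)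
  have hsplit := Set.ncard_add_ncard_compl {x : G | orderOf x = q}
  rw [Set.compl_ofPred, ncard_setOf_orderOf_eq_prime hQ, hsyl, hG, Nat.mul_sub_one] at hsplit
  have hm : m ≤ m * q := Nat.le_mul_of_pos_right m (Fact.out : q.Prime).pos
  have hKm : (K : Set G).ncard = m := (Nat.card_coe_set_eq _).symm.trans hK
  simp only [ne_eq, hKm]
  omega

theorem Sylow.subsingleton_of_card_sylow_eq {p q n : ℕ} [Fact p.Prime] [Fact q.Prime]
    (hpq : p ≠ q) (hG : Nat.card G = p ^ n * q) (hsyl : Nat.card (Sylow q G) = p ^ n) :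
    Subsingleton (Sylow p G) := by
  have hpq' : ¬ p ∣ q := fun h => hpq ((Nat.prime_dvd_prime_iff_eq Fact.out Fact.out).mp h)
  have hP (P : Sylow p G) : (P : Set G) = {x | orderOf x ≠ q} :=
    coe_eq_setOf_orderOf_ne_of_card_sylow_eq hG hsyl (P.card_eq_pow_of_card_eq_pow_mul hG hpq')
  exact ⟨fun P₁ P₂ => Sylow.ext (SetLike.coe_injective ((hP P₁).trans (hP P₂).symm))⟩

end

theorem stmt_18 (p q : ℕ) (hp : p.Prime) (hq : q.Prime)
    (hdvd : q ∣ ∑ i ∈ Finset.range p, p ^ i)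
    (H : Type*) [Group H] [Finite H] (hcard : Nat.card H = p ^ p * q) :
    (∃ P : Sylow p H, (P : Subgroup H).Normal) ∨
      (∃ Q : Sylow q H, (Q : Subgroup H).Normal) := by
  have := Fact.mk hp
  have := Fact.mk hq
  have hord : orderOf (p : ZMod q) = p := ZMod.orderOf_natCast_eq_of_dvd_geom_sum hdvd
  have hpq : p ≠ q := by
    rintro rfl
    simp [eq_comm, hp.ne_zero] at hord
  rcases card_sylow_eq_one_or_eq_pow hcard hord with hone | hmany
  · have : Subsingleton (Sylow q H) := (Nat.card_eq_one_iff_unique.mp hone).1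
    exact Or.inr (Sylow.nonempty.elim fun Q => ⟨Q, Q.normal_of_subsingleton⟩)
  · have := Sylow.subsingleton_of_card_sylow_eq hpq hcard hmany
    exact Or.inl (Sylow.nonempty.elim fun P => ⟨P, P.normal_of_subsingleton⟩)
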